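/- Let X be a finite set with at least two elements, let 0 < m ≤ 1/|X|, and let W be a set equipped with a map w ↦ p_w into the restricted simplex Δ̊_m(X). Then there exists a constant C > 0 (depending only on m) such that for every ε > 0 and every pair of distributions q, p* ∈ Δ̊_m(X) with D(q‖p*) ≤ ε, the following set inclusions hold: {w ∈ W : D(q‖p_w) ≤ ε} ⊆ {w ∈ W : D(p_w‖p*) ≤ C·ε} ⊆ {w ∈ W : D(q‖p_w) ≤ (C/2)·(C + 1)·ε}. -/

import Mathlib

/-!
Sandwich the KL divergence between squared Euclidean distances: on the simplex
`‖q - p‖² ≤ 2 D(q‖p)`, and if `p ≥ m` pointwise then `D(q‖p) ≤ χ²(q‖p) ≤ ‖q - p‖² / m`.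
Since `‖·‖²` obeys the triangle inequality up to a factor `2`, both inclusions follow
with `C = 8 / m`.
-/

open Finset

/-- A probability distribution on a finite type: nonnegative and sums to 1. -/
def IsProb {X : Type*} [Fintype X] (p : X → ℝ) : Prop :=
  (∀ x, 0 ≤ p x) ∧ ∑ x, p x = 1

/-- Kullback–Leibler divergence between distributions on a finite type. -/
noncomputable def klDiv {X : Type*} [Fintype X] (q p : X → ℝ) : ℝ :=
  ∑ x, q x * Real.log (q x / p x)

noncomputable def sqDist {X : Type*} [Fintype X] (q p : X → ℝ) : ℝ :=
  ∑ x, (q x - p x) ^ 2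

section SqDist

variable {X : Type*} [Fintype X]

lemma sqDist_comm (q p : X → ℝ) : sqDist q p = sqDist p q :=
  sum_congr rfl fun _ _ => by ring

lemma sqDist_le_two_mul_add (f g h : X → ℝ) :
    sqDist f h ≤ 2 * (sqDist f g + sqDist g h) := by
  simp only [sqDist, mul_add, mul_sum, ← sum_add_distrib]
  exact sum_le_sum fun x _ => by nlinarith [sq_nonneg (f x - 2 * g x + h x)]

end SqDist

lemma IsProb.le_one {X : Type*} [Fintype X] {p : X → ℝ} (hp : IsProb p) (x : X) :
    p x ≤ 1 :=
  hp.2 ▸ single_le_sum (fun y _ => hp.1 y) (mem_univ x)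

namespace Real

lemma log_le_sub_inv_div_two {y : ℝ} (hy : 1 ≤ y) : log y ≤ (y - y⁻¹) / 2 :=
  sinh_log (by linarith) ▸ self_le_sinh_iff.2 (log_nonneg hy)

lemma two_mul_sub_div_add_le_log_div {a b : ℝ} (hb : 0 < b) (hba : b ≤ a) :
    2 * (a - b) / (a + b) ≤ log (a / b) := by
  have h := le_log_one_add_of_nonneg (div_nonneg (sub_nonneg.2 hba) hb.le)
  have hden : (a - b) / b + 2 = (a + b) / b := by field_simp; ring
  rwa [hden, mul_div_assoc', div_div_div_cancel_right₀ hb.ne', one_add_div hb.ne',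
    add_sub_cancel] at h

/-- The summand of `D(q‖p)` after adding `p - q`, which sums to zero. -/
lemma sq_sub_div_two_le_mul_log_div_sub_add {a b : ℝ} (ha : 0 < a) (ha1 : a ≤ 1)
    (hb : 0 < b) (hb1 : b ≤ 1) :
    (a - b) ^ 2 / 2 ≤ a * log (a / b) - a + b := by
  rcases le_total b a with hba | hab
  · have hlog := mul_le_mul_of_nonneg_left (two_mul_sub_div_add_le_log_div hb hba) ha.le
    have hsum : 0 < a + b := by linarith
    calc (a - b) ^ 2 / 2 ≤ (a - b) ^ 2 / (a + b) :=
          div_le_div_of_nonneg_left (sq_nonneg _) hsum (by linarith)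
      _ = a * (2 * (a - b) / (a + b)) - a + b := by field_simp; ring
      _ ≤ a * log (a / b) - a + b := by linarith
  · have hlog := mul_le_mul_of_nonneg_left
      (log_le_sub_inv_div_two ((one_le_div ha).2 hab)) ha.le
    have hflip : log (a / b) = -log (b / a) := by
      rw [← log_inv, inv_div]
    calc (a - b) ^ 2 / 2 ≤ (a - b) ^ 2 / (2 * b) :=
          div_le_div_of_nonneg_left (sq_nonneg _) (by linarith) (by linarith)
      _ = -(a * ((b / a - (b / a)⁻¹) / 2)) - a + b := by field_simp; ring
      _ ≤ a * log (a / b) - a + b := by rw [hflip]; linarith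

end Real

section KLBounds

variable {X : Type*} [Fintype X] {q p : X → ℝ}

lemma sqDist_le_two_mul_klDiv (hq : IsProb q) (hp : IsProb p) (hq0 : ∀ x, 0 < q x)
    (hp0 : ∀ x, 0 < p x) : sqDist q p ≤ 2 * klDiv q p := by
  have hkl : klDiv q p = ∑ x, (q x * Real.log (q x / p x) - q x + p x) := by
    rw [klDiv, sum_add_distrib, sum_sub_distrib, hq.2, hp.2]
    ring
  rw [hkl, sqDist, ← div_le_iff₀' two_pos, sum_div]
  exact sum_le_sum fun x _ => Real.sq_sub_div_two_le_mul_log_div_sub_add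
    (hq0 x) (hq.le_one x) (hp0 x) (hp.le_one x)

lemma klDiv_le_sum_sq_sub_div (hsum : ∑ x, q x = ∑ x, p x) (hq0 : ∀ x, 0 < q x)
    (hp0 : ∀ x, 0 < p x) : klDiv q p ≤ ∑ x, (q x - p x) ^ 2 / p x := by
  calc klDiv q p ≤ ∑ x, q x * (q x / p x - 1) :=
        sum_le_sum fun x _ => mul_le_mul_of_nonneg_left
          (Real.log_le_sub_one_of_pos (div_pos (hq0 x) (hp0 x))) (hq0 x).le
    _ = ∑ x, ((q x - p x) ^ 2 / p x + (q x - p x)) :=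
        sum_congr rfl fun x _ => by field_simp [(hp0 x).ne']; ring
    _ = ∑ x, (q x - p x) ^ 2 / p x := by
        rw [sum_add_distrib, sum_sub_distrib, hsum, sub_self, add_zero]

lemma klDiv_le_sqDist_div {m : ℝ} (hm : 0 < m) (hq : IsProb q) (hp : IsProb p)
    (hq0 : ∀ x, 0 < q x) (hpm : ∀ x, m ≤ p x) : klDiv q p ≤ sqDist q p / m := by
  have hp0 x : 0 < p x := hm.trans_le (hpm x)
  calc klDiv q p ≤ ∑ x, (q x - p x) ^ 2 / p x :=
        klDiv_le_sum_sq_sub_div (hq.2.trans hp.2.symm) hq0 hp0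
    _ ≤ ∑ x, (q x - p x) ^ 2 / m :=
        sum_le_sum fun x _ => div_le_div_of_nonneg_left (sq_nonneg _) hm (hpm x)
    _ = sqDist q p / m := by rw [sqDist, sum_div]

end KLBounds

theorem stmt10_general {X : Type*} [Fintype X]
    (m : ℝ) (hm : 0 < m)
    {W : Type*} (pW : W → X → ℝ)
    (hpW : ∀ w, IsProb (pW w) ∧ ∀ x, m ≤ pW w x) :
    ∃ C : ℝ, 0 < C ∧
      ∀ ε : ℝ, 0 < ε →
        ∀ q pstar : X → ℝ,
          IsProb q → (∀ x, m ≤ q x) →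
          IsProb pstar → (∀ x, m ≤ pstar x) →
          klDiv q pstar ≤ ε →
          {w : W | klDiv q (pW w) ≤ ε} ⊆ {w : W | klDiv (pW w) pstar ≤ C * ε} ∧
          {w : W | klDiv (pW w) pstar ≤ C * ε} ⊆
            {w : W | klDiv q (pW w) ≤ (C / 2) * (C + 1) * ε} := by
  have pos {p : X → ℝ} (hpm : ∀ x, m ≤ p x) x : 0 < p x := hm.trans_le (hpm x)
  refine ⟨8 / m, by positivity, fun ε _ q pstar hq hqm hps hpsm hqps => ?_⟩
  have hqps_sq := sqDist_le_two_mul_klDiv hq hps (pos hqm) (pos hpsm)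
  refine ⟨Set.ofPred_subset_ofPred.2 fun w hw => ?_, Set.ofPred_subset_ofPred.2 fun w hw => ?_⟩
  · obtain ⟨hw_prob, hwm⟩ := hpW w
    have hqw := sqDist_le_two_mul_klDiv hq hw_prob (pos hqm) (pos hwm)
    have htri := sqDist_le_two_mul_add (pW w) q pstar
    calc klDiv (pW w) pstar ≤ sqDist (pW w) pstar / m :=
          klDiv_le_sqDist_div hm hw_prob hps (pos hwm) hpsm
      _ ≤ 8 * ε / m := by gcongr; rw [sqDist_comm] at hqw; linarith
      _ = 8 / m * ε := by ring
  · obtain ⟨hw_prob, hwm⟩ := hpW w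
    have hwps := sqDist_le_two_mul_klDiv hw_prob hps (pos hwm) (pos hpsm)
    have htri := sqDist_le_two_mul_add q pstar (pW w)
    calc klDiv q (pW w) ≤ sqDist q (pW w) / m :=
          klDiv_le_sqDist_div hm hq hw_prob (pos hqm) hwm
      _ ≤ 4 * (1 + 8 / m) * ε / m := by
          gcongr; rw [sqDist_comm pstar] at htri; linarith
      _ = 8 / m / 2 * (8 / m + 1) * ε := by ring

/-- for a parameterized family `w ↦ p_w` in the restricted
simplex `Δ̊_m(X)`, there is `C > 0` such that whenever `D(q‖p*) ≤ ε`,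
`{w : D(q‖p_w) ≤ ε} ⊆ {w : D(p_w‖p*) ≤ Cε} ⊆ {w : D(q‖p_w) ≤ (C/2)(C+1)ε}`. -/
theorem stmt10 {X : Type*} [Fintype X] (hX : 2 ≤ Fintype.card X)
    (m : ℝ) (hm : 0 < m) (hm' : m ≤ 1 / (Fintype.card X : ℝ))
    {W : Type*} (pW : W → X → ℝ)
    (hpW : ∀ w, IsProb (pW w) ∧ ∀ x, m ≤ pW w x) :
    ∃ C : ℝ, 0 < C ∧
      ∀ ε : ℝ, 0 < ε →
        ∀ q pstar : X → ℝ,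
          IsProb q → (∀ x, m ≤ q x) →
          IsProb pstar → (∀ x, m ≤ pstar x) →
          klDiv q pstar ≤ ε →
          {w : W | klDiv q (pW w) ≤ ε} ⊆ {w : W | klDiv (pW w) pstar ≤ C * ε} ∧
          {w : W | klDiv (pW w) pstar ≤ C * ε} ⊆
            {w : W | klDiv q (pW w) ≤ (C / 2) * (C + 1) * ε} :=
  stmt10_general m hm pW hpW
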